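/- Let a > 0 and t > 0. Then there exists a constant C ≥ 0 such that for every positive integer n, |15^{−n}·(5 + cos(a·√(12t/n)) + 9·cos(a·√(2t/n)))^{n} − e^{−a²t}| ≤ C/n³. -/

import Mathlib

/-!
Put `y = a²t/n`. The Chernoff symbol `p = (5 + cos √(12y) + 9 cos √(2y)) / 15` has the same
Taylor expansion as `e^{-y}` up to order `y³`, so `|p - e^{-y}| = O(y⁴)`. Both lie in `[-1, 1]`, so
`|pⁿ - e^{-yn}| ≤ n |p - e^{-y}| = O(n · n⁻⁴)`, which is the rate `n⁻³`; the finitely many `n`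
below `12a²t`, where the Taylor bounds do not apply, are covered by the trivial bound `2`.
-/
open Real Finset

lemma Real.abs_cos_sub_taylor_le {x : ℝ} (hx : |x| ≤ 1) :
    |cos x - (1 - x ^ 2 / 2 + x ^ 4 / 24 - x ^ 6 / 720)| ≤ x ^ 8 := by
  have hS : (∑ m ∈ range 8, ((x : ℂ) * Complex.I) ^ m / m.factorial).re
      = 1 - x ^ 2 / 2 + x ^ 4 / 24 - x ^ 6 / 720 := by
    simp [sum_range_succ, Nat.factorial, mul_pow, ← Complex.ofReal_pow]
    ring
  calc |cos x - (1 - x ^ 2 / 2 + x ^ 4 / 24 - x ^ 6 / 720)|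
      = |(Complex.exp (x * Complex.I)
          - ∑ m ∈ range 8, ((x : ℂ) * Complex.I) ^ m / m.factorial).re| := by
        rw [Complex.sub_re, hS, Complex.exp_ofReal_mul_I_re]
    _ ≤ _ := Complex.abs_re_le_norm _
    _ ≤ _ := Complex.exp_bound (by simpa) (by norm_num)
    _ ≤ x ^ 8 := by
        simp only [Complex.norm_mul, Complex.norm_real, Complex.norm_I, mul_one, norm_eq_abs,
          (by decide : Even 8).pow_abs]
        exact mul_le_of_le_one_right (by positivity) (by norm_num [Nat.factorial])

lemma Real.abs_exp_sub_taylor_le {x : ℝ} (hx : |x| ≤ 1) :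
    |exp x - (1 + x + x ^ 2 / 2 + x ^ 3 / 6)| ≤ x ^ 4 := by
  calc |exp x - (1 + x + x ^ 2 / 2 + x ^ 3 / 6)|
      = |exp x - ∑ m ∈ range 4, x ^ m / m.factorial| := by
        simp [sum_range_succ, Nat.factorial]
    _ ≤ _ := Real.exp_bound hx (n := 4) (by norm_num)
    _ ≤ x ^ 4 := by
        rw [(by decide : Even 4).pow_abs]
        exact mul_le_of_le_one_right (by positivity) (by norm_num [Nat.factorial])

lemma abs_pow_sub_pow_le_of_abs_le_one {p q : ℝ} (hp : |p| ≤ 1) (hq : |q| ≤ 1) (n : ℕ) :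
    |p ^ n - q ^ n| ≤ n * |p - q| :=
  calc |p ^ n - q ^ n| ≤ |p - q| * n * max |p| |q| ^ (n - 1) := abs_pow_sub_pow_le ..
    _ ≤ |p - q| * n * 1 := by gcongr; exact pow_le_one₀ (by positivity) (max_le hp hq)
    _ = n * |p - q| := by ring

lemma abs_chernoff_symbol_le_one (x₁ x₂ : ℝ) : |(5 + cos x₁ + 9 * cos x₂) / 15| ≤ 1 := by
  rw [abs_le]
  constructor <;> linarith [neg_one_le_cos x₁, neg_one_le_cos x₂, cos_le_one x₁, cos_le_one x₂]

lemma abs_chernoff_symbol_sub_exp_le {x₁ x₂ y : ℝ} (h₁ : x₁ ^ 2 = 12 * y) (h₂ : x₂ ^ 2 = 2 * y)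
    (hy : 12 * y ≤ 1) :
    |(5 + cos x₁ + 9 * cos x₂) / 15 - exp (-y)| ≤ 1393 * y ^ 4 := by
  -- the Taylor polynomials cancel; the remainders give `1393 = 12⁴ / 15 + 9 · 2⁴ / 15 + 1`
  have hy₀ : 0 ≤ y := by nlinarith [sq_nonneg x₂]
  have hc₁ := abs_cos_sub_taylor_le (x := x₁) (by rw [← sq_le_one_iff_abs_le_one]; linarith)
  have hc₂ := abs_cos_sub_taylor_le (x := x₂) (by rw [← sq_le_one_iff_abs_le_one]; linarith)
  have he := abs_exp_sub_taylor_le (x := -y) (by rw [abs_neg, abs_of_nonneg hy₀]; linarith)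
  obtain ⟨h₁₄, h₁₆, h₁₈⟩ :
      x₁ ^ 4 = (12 * y) ^ 2 ∧ x₁ ^ 6 = (12 * y) ^ 3 ∧ x₁ ^ 8 = (12 * y) ^ 4 := by
    simp only [← h₁, ← pow_mul]; norm_num
  obtain ⟨h₂₄, h₂₆, h₂₈⟩ :
      x₂ ^ 4 = (2 * y) ^ 2 ∧ x₂ ^ 6 = (2 * y) ^ 3 ∧ x₂ ^ 8 = (2 * y) ^ 4 := by
    simp only [← h₂, ← pow_mul]; norm_num
  rw [h₁, h₁₄, h₁₆, h₁₈] at hc₁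
  rw [h₂, h₂₄, h₂₆, h₂₈] at hc₂
  rw [abs_le] at *
  constructor <;> nlinarith

lemma abs_pow_sub_pow_le_two {p q : ℝ} (hp : |p| ≤ 1) (hq : |q| ≤ 1) (n : ℕ) :
    |p ^ n - q ^ n| ≤ 2 :=
  calc |p ^ n - q ^ n| ≤ |p| ^ n + |q| ^ n := by rw [← abs_pow, ← abs_pow]; exact abs_sub _ _
    _ ≤ 1 + 1 := add_le_add (pow_le_one₀ (abs_nonneg p) hp) (pow_le_one₀ (abs_nonneg q) hq)
    _ = 2 := one_add_one_eq_two

theorem chernoff_heat_third_sin_rate_general (a t : ℝ) (ht : 0 < t) :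
    ∃ C : ℝ, 0 ≤ C ∧ ∀ n : ℕ, 0 < n →
      |(1 / 15 ^ n)
          * (5 + Real.cos (a * Real.sqrt (12 * t / n))
              + 9 * Real.cos (a * Real.sqrt (2 * t / n))) ^ n
          - Real.exp (-(a ^ 2) * t)|
        ≤ C / (n : ℝ) ^ 3 := by
  refine ⟨1393 * a ^ 8 * t ^ 4 + 2 * (12 * a ^ 2 * t) ^ 3, by positivity, fun n hn => ?_⟩
  have hn' : (0 : ℝ) < n := Nat.cast_pos.mpr hn
  set p := (5 + cos (a * √(12 * t / n)) + 9 * cos (a * √(2 * t / n))) / 15 with hp_def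
  set y := a ^ 2 * t / n with hy_def
  have hq₁ : |exp (-y)| ≤ 1 := by
    rw [abs_of_pos (exp_pos _), exp_le_one_iff, neg_nonpos]; positivity
  rw [one_div_mul_eq_div, ← div_pow, ← hp_def,
    show -(a ^ 2) * t = n * -y by rw [hy_def]; field_simp, exp_nat_mul]
  rcases le_or_gt (12 * a ^ 2 * t) (n : ℝ) with hlarge | hsmall
  · have hsq (c : ℝ) (hc : 0 ≤ c) : (a * √(c * t / n)) ^ 2 = c * y := by
      rw [mul_pow, sq_sqrt (by positivity)]; ring
    have hy : 12 * y ≤ 1 := by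
      rw [show 12 * y = 12 * a ^ 2 * t / n by ring, div_le_one hn']; exact hlarge
    calc |p ^ n - exp (-y) ^ n| ≤ n * |p - exp (-y)| :=
          abs_pow_sub_pow_le_of_abs_le_one (abs_chernoff_symbol_le_one _ _) hq₁ n
      _ ≤ n * (1393 * y ^ 4) := by
          gcongr; exact abs_chernoff_symbol_sub_exp_le (hsq 12 (by norm_num)) (hsq 2 (by norm_num)) hy
      _ = 1393 * a ^ 8 * t ^ 4 / n ^ 3 := by rw [hy_def]; field_simp
      _ ≤ _ := by gcongr; exact le_add_of_nonneg_right (by positivity)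
  · calc |p ^ n - exp (-y) ^ n| ≤ 2 := abs_pow_sub_pow_le_two (abs_chernoff_symbol_le_one _ _) hq₁ n
      _ ≤ 2 * (12 * a ^ 2 * t) ^ 3 / n ^ 3 := by
          rw [le_div_iff₀ (by positivity)]; gcongr
      _ ≤ _ := by gcongr; exact le_add_of_nonneg_left (by positivity)

theorem chernoff_heat_third_sin_rate (a t : ℝ) (ha : 0 < a) (ht : 0 < t) :
    ∃ C : ℝ, 0 ≤ C ∧ ∀ n : ℕ, 0 < n →
      |(1 / 15 ^ n)
          * (5 + Real.cos (a * Real.sqrt (12 * t / n))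
              + 9 * Real.cos (a * Real.sqrt (2 * t / n))) ^ n
          - Real.exp (-(a ^ 2) * t)|
        ≤ C / (n : ℝ) ^ 3 :=
  chernoff_heat_third_sin_rate_general a t ht
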